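/- Let F be a finite field and n a positive integer with n ≤ 2. Then the unitary Cayley graph Γ(M_n(F)) of the ring of n×n matrices over F is well-covered. -/

import Mathlib

open Pointwise

/-- The unitary Cayley graph of a ring `R`: vertices are elements of `R`,
and `x`, `y` are adjacent iff `x - y` is a unit. -/
def unitaryCayley (R : Type*) [Ring R] : SimpleGraph R where
  Adj x y := x ≠ y ∧ IsUnit (x - y)
  symm := ⟨by
    rintro x y ⟨hne, hu⟩
    exact ⟨hne.symm, by simpa [neg_sub] using hu.neg⟩⟩
  loopless := ⟨by rintro x ⟨h, -⟩; exact h rfl⟩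

/-- A set of vertices is independent if its elements are pairwise nonadjacent. -/
def IsIndepSet {V : Type*} (G : SimpleGraph V) (A : Set V) : Prop :=
  A.Pairwise fun x y => ¬ G.Adj x y

/-- A maximal independent set. -/
def IsMaxIndepSet {V : Type*} (G : SimpleGraph V) (A : Set V) : Prop :=
  IsIndepSet G A ∧ ∀ B : Set V, IsIndepSet G B → A ⊆ B → A = B

/-- A graph is well-covered if all its maximal independent sets have the same cardinality. -/
def WellCovered {V : Type*} (G : SimpleGraph V) : Prop :=
  ∀ A B : Set V, IsMaxIndepSet G A → IsMaxIndepSet G B → A.ncard = B.ncard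

/-- The reduced `k`-diagonal matrix `D_k(a)`:  the `(i, j)` entry is `a (i - k)`
when `j = i + k` (mod `n`) and `i ≠ k`, and `0` otherwise. -/
def Dmat {n : ℕ} (F : Type*) [Field F] (k : Fin n) (a : Fin n → F) :
    Matrix (Fin n) (Fin n) F :=
  Matrix.of fun i j => if i ≠ k ∧ j = i + k then a (i - k) else 0

/-- The family `𝒟` of all reduced diagonal matrices `D_k(a₁, …, a_{n-1})`. -/
def DSet {n : ℕ} (F : Type*) [Field F] : Set (Matrix (Fin n) (Fin n) F) :=
  {M | ∃ (k : Fin n) (a : Fin n → F), M = Dmat F k a}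

/-- The Jacobson radical of a (possibly noncommutative) ring, as a two-sided ideal. -/
noncomputable def jacRad (R : Type*) [Ring R] : TwoSidedIdeal R :=
  (⊥ : TwoSidedIdeal R).jacobson

/-- The quotient of `R` by its Jacobson radical. -/
abbrev JacQuot (R : Type*) [Ring R] := (jacRad R).ringCon.Quotient

/-- The quotient map `R → R/J(R)`. -/
noncomputable def jacMk (R : Type*) [Ring R] : R →+* JacQuot R := (jacRad R).ringCon.mk'

/-!
Two matrices are adjacent exactly when their difference is invertible. For `n ≤ 1` the matrix
ring is a field (or zero), so the graph is complete and every maximal independent set is a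
single vertex. For `n = 2`, translate a maximal independent set `A` so that it contains `0`;
then all its elements are singular, i.e. of the form `u wᵀ`. Since
`det (a bᵀ - c dᵀ) = -(a × c) (b × d)`, two such matrices are nonadjacent iff they share their
column line or their row line, and a family in which any two members share one of these lines
shares a common column line or a common row line. Hence `A` is `x + {u wᵀ | w}` or
`x + {w uᵀ | w}` for some `u ≠ 0`, a set of `|F|²` elements.
-/

open Matrix

section Graph

variable {V : Type*} {G : SimpleGraph V}

theorem IsMaxIndepSet.nonempty [Nonempty V] {A : Set V} (hA : IsMaxIndepSet G A) :
    A.Nonempty := by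
  obtain ⟨v⟩ := ‹Nonempty V›
  rw [Set.nonempty_iff_ne_empty]
  rintro rfl
  exact Set.singleton_ne_empty v (hA.2 {v} (Set.pairwise_singleton _ _) (Set.empty_subset _)).symm

theorem IsMaxIndepSet.ncard_eq_of_subset_range {W : Type*} {A : Set V} {f : W → V}
    (hA : IsMaxIndepSet G A) (hf : f.Injective) (hindep : IsIndepSet G (Set.range f))
    (hsub : A ⊆ Set.range f) : A.ncard = Nat.card W := by
  rw [hA.2 _ hindep hsub, Set.ncard_range_of_injective hf]

theorem wellCovered_of_forall_adj [Nonempty V] (h : ∀ x y, x ≠ y → G.Adj x y) :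
    WellCovered G := by
  suffices ∀ A, IsMaxIndepSet G A → A.ncard = 1 from
    fun A B hA hB => by rw [this A hA, this B hB]
  intro A hA
  obtain ⟨x, hx⟩ := hA.nonempty
  refine Set.ncard_eq_one.mpr ⟨x, Set.eq_singleton_iff_unique_mem.mpr ⟨hx, fun y hy => ?_⟩⟩
  by_contra hyx
  exact hA.1 hy hx hyx (h y x hyx)

end Graph

section Matrix

variable {F : Type*} [Field F]

theorem unitaryCayley_matrix_adj_iff {n : ℕ} {M N : Matrix (Fin n) (Fin n) F} :
    (unitaryCayley (Matrix (Fin n) (Fin n) F)).Adj M N ↔ M ≠ N ∧ (M - N).det ≠ 0 := by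
  simp only [unitaryCayley, isUnit_iff_isUnit_det, isUnit_iff_ne_zero]

theorem isIndepSet_unitaryCayley_matrix_iff {n : ℕ} [NeZero n]
    {S : Set (Matrix (Fin n) (Fin n) F)} :
    IsIndepSet (unitaryCayley _) S ↔ ∀ M ∈ S, ∀ N ∈ S, (M - N).det = 0 := by
  refine ⟨fun hS M hM N hN => ?_, fun hS M hM N hN hMN hadj => ?_⟩
  · by_cases hMN : M = N
    · simp [hMN]
    · simpa [unitaryCayley_matrix_adj_iff, hMN] using hS hM hN hMN
  · exact (unitaryCayley_matrix_adj_iff.mp hadj).2 (hS M hM N hN)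

theorem IsMaxIndepSet.ncard_eq_of_sub_subset_range {n : ℕ} [NeZero n]
    {A : Set (Matrix (Fin n) (Fin n) F)} (hA : IsMaxIndepSet (unitaryCayley _) A)
    {x : Matrix (Fin n) (Fin n) F} {W : Type*} {g : W → Matrix (Fin n) (Fin n) F}
    (hg : g.Injective) (hdet : ∀ w w', (g w - g w').det = 0)
    (hsub : (· - x) '' A ⊆ Set.range g) : A.ncard = Nat.card W := by
  refine hA.ncard_eq_of_subset_range (f := fun w => x + g w) ((add_right_injective x).comp hg)
    (isIndepSet_unitaryCayley_matrix_iff.mpr ?_) fun M hM => ?_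
  · rintro _ ⟨w, rfl⟩ _ ⟨w', rfl⟩
    rw [add_sub_add_left_eq_sub]
    exact hdet w w'
  · obtain ⟨w, hw⟩ := hsub ⟨M, hM, rfl⟩
    exact ⟨w, eq_sub_iff_add_eq'.mp hw⟩

theorem wellCovered_unitaryCayley_fin_one :
    WellCovered (unitaryCayley (Matrix (Fin 1) (Fin 1) F)) := by
  refine wellCovered_of_forall_adj fun M N hMN => unitaryCayley_matrix_adj_iff.mpr ⟨hMN, ?_⟩
  rw [det_fin_one, Matrix.sub_apply, sub_ne_zero]
  exact fun h => hMN (ext fun i j => by fin_cases i; fin_cases j; exact h)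

end Matrix

section Cross

variable {F : Type*} [Field F]

def cross (a c : Fin 2 → F) : F := a 0 * c 1 - a 1 * c 0

theorem cross_comm (a c : Fin 2 → F) : cross a c = -cross c a := by
  simp only [cross]; ring

theorem cross_eq_zero_comm {a c : Fin 2 → F} : cross a c = 0 ↔ cross c a = 0 := by
  rw [cross_comm, neg_eq_zero]

theorem det_fin_two_eq_cross (M : Matrix (Fin 2) (Fin 2) F) :
    M.det = cross (fun i => M i 0) (fun i => M i 1) := by
  rw [det_fin_two, cross]; ring

theorem det_vecMulVec_sub_vecMulVec (a b c d : Fin 2 → F) :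
    (vecMulVec a b - vecMulVec c d).det = -(cross a c * cross b d) := by
  simp only [det_fin_two, Matrix.sub_apply, vecMulVec_apply, cross]; ring

theorem exists_eq_smul_of_cross_eq_zero {v c : Fin 2 → F} (hv : v ≠ 0) (h : cross v c = 0) :
    ∃ t : F, c = t • v := by
  obtain ⟨i, hi⟩ := Function.ne_iff.mp hv
  refine ⟨c i / v i, funext fun j => ?_⟩
  rw [Pi.smul_apply, smul_eq_mul, div_mul_eq_mul_div, eq_div_iff hi]
  simp only [cross, Pi.zero_apply] at h hi
  fin_cases i <;> fin_cases j <;> simp <;> first | linear_combination h | linear_combination -h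

theorem cross_eq_zero_of_cross_eq_zero {v a c : Fin 2 → F} (hv : v ≠ 0) (ha : cross v a = 0)
    (hc : cross v c = 0) : cross a c = 0 := by
  obtain ⟨s, rfl⟩ := exists_eq_smul_of_cross_eq_zero hv ha
  obtain ⟨t, rfl⟩ := exists_eq_smul_of_cross_eq_zero hv hc
  simp only [cross, Pi.smul_apply, smul_eq_mul]; ring

theorem exists_eq_vecMulVec_of_det_eq_zero {M : Matrix (Fin 2) (Fin 2) F} (h : M.det = 0) :
    ∃ a b, M = vecMulVec a b := by
  rw [det_fin_two_eq_cross] at h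
  by_cases h0 : ∀ i, M i 0 = 0
  · refine ⟨fun i => M i 1, ![0, 1], ext fun i j => ?_⟩
    fin_cases j <;> simp [vecMulVec_apply, h0]
  · obtain ⟨t, ht⟩ := exists_eq_smul_of_cross_eq_zero (fun h' => h0 (congrFun h')) h
    refine ⟨fun i => M i 0, ![1, t], ext fun i j => ?_⟩
    fin_cases j <;> simp [vecMulVec_apply, congrFun ht i, mul_comm]

end Cross

section VecMulVec

variable {R : Type*} [Ring R] [NoZeroDivisors R] {n : Type*} {u : n → R}

theorem vecMulVec_right_injective (hu : u ≠ 0) : (vecMulVec u : (n → R) → _).Injective :=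
  fun w w' h => sub_eq_zero.mp <|
    (vecMulVec_eq_zero.mp (by rw [vecMulVec_sub, h, sub_self])).resolve_left hu

theorem vecMulVec_left_injective (hu : u ≠ 0) : (vecMulVec · u : (n → R) → _).Injective :=
  fun w w' h => sub_eq_zero.mp <|
    (vecMulVec_eq_zero.mp (by rw [sub_vecMulVec, sub_eq_zero]; exact h)).resolve_right hu

end VecMulVec

section TwoByTwo

variable {F : Type*} [Field F] {S : Set (Matrix (Fin 2) (Fin 2) F)}

theorem cross_eq_zero_or_of_vecMulVec_mem (hS : ∀ M ∈ S, ∀ N ∈ S, (M - N).det = 0)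
    {a b c d : Fin 2 → F} (hab : vecMulVec a b ∈ S) (hcd : vecMulVec c d ∈ S) :
    cross a c = 0 ∨ cross b d = 0 := by
  simpa [det_vecMulVec_sub_vecMulVec] using hS _ hab _ hcd

theorem subset_range_vecMulVec_left_of_cross_ne_zero
    (hS : ∀ M ∈ S, ∀ N ∈ S, (M - N).det = 0) (h0 : 0 ∈ S) {a b c d : Fin 2 → F}
    (hab : vecMulVec a b ∈ S) (hcd : vecMulVec c d ∈ S)
    (hac : cross a c ≠ 0) (hb : b ≠ 0) (hd : d ≠ 0) : S ⊆ Set.range (vecMulVec · b) := by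
  have hbd : cross b d = 0 := (cross_eq_zero_or_of_vecMulVec_mem hS hab hcd).resolve_left hac
  intro M hM
  obtain ⟨e, f, rfl⟩ := exists_eq_vecMulVec_of_det_eq_zero (by simpa using hS M hM 0 h0)
  by_cases he : e = 0
  · exact ⟨0, by simp [he]⟩
  suffices hbf : cross b f = 0 by
    obtain ⟨t, rfl⟩ := exists_eq_smul_of_cross_eq_zero hb hbf
    exact ⟨t • e, show vecMulVec (t • e) b = _ by rw [smul_vecMulVec, vecMulVec_smul]⟩
  by_contra hbf
  have hea : cross e a = 0 :=
    (cross_eq_zero_or_of_vecMulVec_mem hS hM hab).resolve_right (cross_eq_zero_comm.not.mp hbf)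
  have hec : cross e c = 0 := (cross_eq_zero_or_of_vecMulVec_mem hS hM hcd).resolve_right
    fun hfd => hbf (cross_eq_zero_of_cross_eq_zero hd (cross_eq_zero_comm.mp hbd)
      (cross_eq_zero_comm.mp hfd))
  exact hac (cross_eq_zero_of_cross_eq_zero he hea hec)

theorem exists_subset_range_vecMulVec (hS : ∀ M ∈ S, ∀ N ∈ S, (M - N).det = 0)
    (h0 : 0 ∈ S) :
    ∃ u ≠ 0, S ⊆ Set.range (vecMulVec u) ∨ S ⊆ Set.range (vecMulVec · u) := by
  by_cases hS0 : S ⊆ {0}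
  · refine ⟨Pi.single 0 1, by simp, Or.inl fun M hM => ⟨0, ?_⟩⟩
    rw [Set.eq_of_mem_singleton (hS0 hM), vecMulVec_zero]
  obtain ⟨y, hy, hy0⟩ := Set.not_subset.mp hS0
  obtain ⟨a, b, rfl⟩ := exists_eq_vecMulVec_of_det_eq_zero (by simpa using hS _ hy 0 h0)
  obtain ⟨ha, hb⟩ : a ≠ 0 ∧ b ≠ 0 := by simpa [not_or] using hy0
  by_cases hSa : S ⊆ Set.range (vecMulVec a)
  · exact ⟨a, ha, Or.inl hSa⟩
  obtain ⟨z, hz, hza⟩ := Set.not_subset.mp hSa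
  obtain ⟨c, d, rfl⟩ := exists_eq_vecMulVec_of_det_eq_zero (by simpa using hS _ hz 0 h0)
  have hac : cross a c ≠ 0 := fun hac => by
    obtain ⟨t, rfl⟩ := exists_eq_smul_of_cross_eq_zero ha hac
    exact hza ⟨t • d, by rw [vecMulVec_smul, smul_vecMulVec]⟩
  have hd : d ≠ 0 := by rintro rfl; exact hza ⟨0, by simp⟩
  exact ⟨b, hb, Or.inr (subset_range_vecMulVec_left_of_cross_ne_zero hS h0 hy hz hac hb hd)⟩

theorem IsMaxIndepSet.ncard_eq_card_fin_two {A : Set (Matrix (Fin 2) (Fin 2) F)}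
    (hA : IsMaxIndepSet (unitaryCayley _) A) : A.ncard = Nat.card (Fin 2 → F) := by
  obtain ⟨x, hx⟩ := hA.nonempty
  have hdet := isIndepSet_unitaryCayley_matrix_iff.mp hA.1
  have hdet' : ∀ M ∈ (· - x) '' A, ∀ N ∈ (· - x) '' A, (M - N).det = 0 := by
    rintro _ ⟨M, hM, rfl⟩ _ ⟨N, hN, rfl⟩
    rw [sub_sub_sub_cancel_right]
    exact hdet M hM N hN
  obtain ⟨u, hu, hcol | hrow⟩ := exists_subset_range_vecMulVec hdet' ⟨x, hx, sub_self x⟩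
  · exact hA.ncard_eq_of_sub_subset_range (vecMulVec_right_injective hu)
      (fun w w' => by rw [← vecMulVec_sub, det_vecMulVec]) hcol
  · exact hA.ncard_eq_of_sub_subset_range (vecMulVec_left_injective hu)
      (fun w w' => by rw [← sub_vecMulVec, det_vecMulVec]) hrow

theorem wellCovered_unitaryCayley_fin_two :
    WellCovered (unitaryCayley (Matrix (Fin 2) (Fin 2) F)) := fun A B hA hB => by
  rw [hA.ncard_eq_card_fin_two, hB.ncard_eq_card_fin_two]

end TwoByTwo

theorem stmt2_general (F : Type*) [Field F] (n : ℕ) (hn2 : n ≤ 2) :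
    WellCovered (unitaryCayley (Matrix (Fin n) (Fin n) F)) := by
  interval_cases n
  · exact wellCovered_of_forall_adj fun M N hMN => absurd (Subsingleton.elim M N) hMN
  · exact wellCovered_unitaryCayley_fin_one
  · exact wellCovered_unitaryCayley_fin_two

theorem stmt2 (F : Type*) [Field F] [Fintype F] (n : ℕ) (hn : 0 < n) (hn2 : n ≤ 2) :
    WellCovered (unitaryCayley (Matrix (Fin n) (Fin n) F)) :=
  stmt2_general F n hn2
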